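/- For n ≥ 3, Γ(n/2)/Γ((n-1)/2) ≤ √(n/2); consequently the expected rejection-sampling cost (1/√π)·(Γ(n/2)/Γ((n-1)/2))·θ₀·sin^{n-2}(min(θ₀,π/2))/Θ(θ₀) is bounded above by √(n/(2π))·θ₀·sin^{n-2}(min(θ₀,π/2))/Θ(θ₀), where Θ(θ₀) = (1/B((n-1)/2,1/2))·∫₀^{θ₀} sin^{n-2}(x) dx. -/
import Mathlib


open Real

lemma gamma_half_shift_le {x : ℝ} (hx : 0 < x) :
    Real.Gamma (x + 1/2) ≤ Real.sqrt x * Real.Gamma x := by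
  have h := Real.Gamma_mul_add_mul_le_rpow_Gamma_mul_rpow_Gamma
    (s := x) (t := x + 1) hx (by linarith) (a := 1/2) (b := 1/2)
    (by norm_num) (by norm_num) (by norm_num)
  have h1 : (1/2 : ℝ) * x + (1/2 : ℝ) * (x + 1) = x + 1/2 := by ring
  rw [h1, Real.Gamma_add_one hx.ne'] at h
  have hg : 0 < Real.Gamma x := Real.Gamma_pos_of_pos hx
  calc Real.Gamma (x + 1/2) ≤ Real.Gamma x ^ (1/2 : ℝ) * (x * Real.Gamma x) ^ (1/2 : ℝ) := h
    _ = Real.sqrt x * Real.Gamma x := by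
        rw [Real.mul_rpow hx.le hg.le, ← Real.sqrt_eq_rpow, ← Real.sqrt_eq_rpow,
          show Real.sqrt (Real.Gamma x) * (Real.sqrt x * Real.sqrt (Real.Gamma x))
            = Real.sqrt x * (Real.sqrt (Real.Gamma x) * Real.sqrt (Real.Gamma x)) by ring,
          Real.mul_self_sqrt hg.le]

/-- For `n ≥ 3`, `Γ(n/2)/Γ((n-1)/2) ≤ √(n/2)`; consequently the expected
rejection-sampling cost `(1/√π)·(Γ(n/2)/Γ((n-1)/2))·θ₀·sin^{n-2}(min(θ₀,π/2))/Θ(θ₀)`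
is bounded by `√(n/(2π))·θ₀·sin^{n-2}(min(θ₀,π/2))/Θ(θ₀)`, where
`Θ(θ₀) = (1/B((n-1)/2,1/2))·∫₀^{θ₀} sin^{n-2} x dx`. -/
theorem rejection_cost_linear_bound (n : ℕ) (hn : 3 ≤ n) (θ₀ : ℝ)
    (hθ₀ : θ₀ ∈ Set.Ioc 0 π) :
    Real.Gamma ((n:ℝ)/2) / Real.Gamma (((n:ℝ)-1)/2) ≤ Real.sqrt ((n:ℝ)/2)
    ∧ (1 / Real.sqrt π) * (Real.Gamma ((n:ℝ)/2) / Real.Gamma (((n:ℝ)-1)/2))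
        * θ₀ * Real.sin (min θ₀ (π/2)) ^ (n-2)
        / ((1 / (Real.Gamma (((n:ℝ)-1)/2) * Real.Gamma (1/2)
            / Real.Gamma (((n:ℝ)-1)/2 + 1/2)))
          * ∫ x in (0:ℝ)..θ₀, Real.sin x ^ (n-2))
      ≤ Real.sqrt ((n:ℝ)/(2*π)) * θ₀ * Real.sin (min θ₀ (π/2)) ^ (n-2)
        / ((1 / (Real.Gamma (((n:ℝ)-1)/2) * Real.Gamma (1/2)
            / Real.Gamma (((n:ℝ)-1)/2 + 1/2)))
          * ∫ x in (0:ℝ)..θ₀, Real.sin x ^ (n-2)) := by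
  have hn3 : (3:ℝ) ≤ (n:ℝ) := by exact_mod_cast hn
  have hx : 0 < ((n:ℝ)-1)/2 := by linarith
  have hg : 0 < Real.Gamma (((n:ℝ)-1)/2) := Real.Gamma_pos_of_pos hx
  have hratio : Real.Gamma ((n:ℝ)/2) / Real.Gamma (((n:ℝ)-1)/2) ≤ Real.sqrt ((n:ℝ)/2) := by
    have h := gamma_half_shift_le hx
    have h1 : ((n:ℝ)-1)/2 + 1/2 = (n:ℝ)/2 := by ring
    rw [h1] at h
    rw [div_le_iff₀ hg]
    calc Real.Gamma ((n:ℝ)/2) ≤ Real.sqrt (((n:ℝ)-1)/2) * Real.Gamma (((n:ℝ)-1)/2) := h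
      _ ≤ Real.sqrt ((n:ℝ)/2) * Real.Gamma (((n:ℝ)-1)/2) := by
          gcongr; linarith
  refine ⟨hratio, ?_⟩
  have hθ1 : 0 < θ₀ := hθ₀.1
  have hθ2 : θ₀ ≤ π := hθ₀.2
  have hI : 0 < ∫ x in (0:ℝ)..θ₀, Real.sin x ^ (n-2) := by
    apply intervalIntegral.intervalIntegral_pos_of_pos_on
    · exact (Continuous.pow (continuous_sin) _).intervalIntegrable _ _
    · intro x hx'
      exact pow_pos (Real.sin_pos_of_pos_of_lt_pi hx'.1 (lt_of_lt_of_le hx'.2 hθ2)) _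
    · exact hθ1
  have hB : 0 < Real.Gamma (((n:ℝ)-1)/2) * Real.Gamma (1/2)
      / Real.Gamma (((n:ℝ)-1)/2 + 1/2) := by
    apply div_pos (mul_pos hg (Real.Gamma_pos_of_pos (by norm_num)))
    exact Real.Gamma_pos_of_pos (by linarith)
  have hD : 0 < (1 / (Real.Gamma (((n:ℝ)-1)/2) * Real.Gamma (1/2)
      / Real.Gamma (((n:ℝ)-1)/2 + 1/2))) * ∫ x in (0:ℝ)..θ₀, Real.sin x ^ (n-2) :=
    mul_pos (by positivity) hI
  have hsqrt : Real.sqrt ((n:ℝ)/(2*π)) = (1 / Real.sqrt π) * Real.sqrt ((n:ℝ)/2) := by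
    rw [show (n:ℝ)/(2*π) = ((n:ℝ)/2)/π by ring,
      Real.sqrt_div (by positivity : (0:ℝ) ≤ (n:ℝ)/2) π]
    ring
  apply div_le_div_of_nonneg_right (c := _) ?_ hD.le |>.trans_eq rfl
  rw [hsqrt]
  have hs : (0:ℝ) ≤ Real.sin (min θ₀ (π/2)) ^ (n-2) := by
    apply pow_nonneg
    apply Real.sin_nonneg_of_nonneg_of_le_pi
    · exact le_min hθ1.le (by positivity)
    · exact (min_le_left _ _).trans hθ2
  have hπ : (0:ℝ) < Real.sqrt π := Real.sqrt_pos.mpr pi_pos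
  gcongr
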